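/- arXiv:1908.08324 — 2 statements merged into one kernel-verified Lean document; each statement's English description precedes it below -/
import Mathlib

section
/- Let H be a simply connected combinatorial strata structure endowed with a datum (N, {P_J}) of nodal strata, and let B be a nodal separating block of N in H. Then for every i ∈ I, the sets A_B(i) and B_B(i) are both nonempty, they are disjoint, and A_B(i) ∪ B_B(i) = H(1). -/
/-- A combinatorial strata structure with minimal set of indices the (finite) type `I`:
an open subset of `𝒫(I)` (i.e. a family closed under taking subsets) containing all
singletons. -/
def IsCSS {I : Type*} (H : Set (Finset I)) : Prop :=
  (∀ J ∈ H, ∀ J' : Finset I, J' ⊆ J → J' ∈ H) ∧ ∀ i : I, ({i} : Finset I) ∈ H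

/-- `level H k` is `H(k)`, the set of strata of `H` with exactly `k` elements. -/
def level {I : Type*} (H : Set (Finset I)) (k : ℕ) : Set (Finset I) :=
  {J ∈ H | J.card = k}

/-- A `k`-path in `H`: a nonempty sequence of strata of `H(k)` such that the union of
any two consecutive entries lies in `H(k+1)`. -/
def IsKPath {I : Type*} [DecidableEq I] (H : Set (Finset I)) (k : ℕ)
    (γ : List (Finset I)) : Prop :=
  γ ≠ [] ∧ (∀ J ∈ γ, J ∈ level H k) ∧
    γ.Chain' fun J J' => (J ∪ J') ∈ level H (k + 1)

/-- The path `γ` joins `J` and `J'`. -/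
def Joins {I : Type*} (γ : List (Finset I)) (J J' : Finset I) : Prop :=
  γ.head? = some J ∧ γ.getLast? = some J'

/-- The subsupport of a path: the sequence of unions of consecutive entries. -/
def subSup {I : Type*} [DecidableEq I] (γ : List (Finset I)) : List (Finset I) :=
  List.zipWith (· ∪ ·) γ γ.tail

open Classical in
/-- `kappa B γ`: the number of entries of the subsupport of `γ` that belong to `B`. -/
noncomputable def kappa {I : Type*} [DecidableEq I] (B : Set (Finset I))
    (γ : List (Finset I)) : ℕ :=
  (subSup γ).countP fun J => decide (J ∈ B)

/-- `A` is `k`-connected in `H`: any two elements of `A` are joined by a `k`-path in `H`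
with support contained in `A`. -/
def KConnectedIn {I : Type*} [DecidableEq I] (H : Set (Finset I)) (k : ℕ)
    (A : Set (Finset I)) : Prop :=
  ∀ J ∈ A, ∀ J' ∈ A, ∃ γ : List (Finset I),
    IsKPath H k γ ∧ Joins γ J J' ∧ ∀ K ∈ γ, K ∈ A

/-- `C` is a `k`-connected component of `A` in `H`: a maximal nonempty `k`-connected
subset of `A`. -/
def IsKComponent {I : Type*} [DecidableEq I] (H : Set (Finset I)) (k : ℕ)
    (A C : Set (Finset I)) : Prop :=
  C.Nonempty ∧ C ⊆ A ∧ KConnectedIn H k C ∧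
    ∀ C' : Set (Finset I), C ⊆ C' → C' ⊆ A → KConnectedIn H k C' → C' = C

/-- `H` is 1-connected: `H(1)` is 1-connected in `H`. -/
def OneConnected {I : Type*} [DecidableEq I] (H : Set (Finset I)) : Prop :=
  KConnectedIn H 1 (level H 1)

/-- One-sided version of an elementary homotopic pair of 1-paths in `H`. -/
def ElemPairCore {I : Type*} [DecidableEq I] (H : Set (Finset I))
    (ε ε' : List (Finset I)) : Prop :=
  ε = ε'
  ∨ (∃ i₁ i₂ : I, ε = [{i₁}, {i₂}, {i₁}] ∧ ε' = [{i₁}])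
  ∨ (∃ i₁ i₂ i₃ : I, ε = [{i₁}, {i₂}] ∧ ε' = [{i₁}, {i₃}, {i₂}] ∧
      IsKPath H 2 [{i₁, i₃}, {i₃, i₂}])

/-- An elementary homotopic pair of 1-paths in `H` (up to swapping the two paths). -/
def ElemPair {I : Type*} [DecidableEq I] (H : Set (Finset I))
    (ε ε' : List (Finset I)) : Prop :=
  ElemPairCore H ε ε' ∨ ElemPairCore H ε' ε

/-- `γ₂` is obtained from `γ₁` by an elementary homotopy. -/
def ElemHomotopy {I : Type*} [DecidableEq I] (H : Set (Finset I))
    (γ₁ γ₂ : List (Finset I)) : Prop :=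
  ∃ δ ε₁ ε₂ ρ : List (Finset I),
    ElemPair H ε₁ ε₂ ∧ γ₁ = δ ++ ε₁ ++ ρ ∧ γ₂ = δ ++ ε₂ ++ ρ

/-- `γ` and `γ'` are homotopically equivalent in `H` with support in `A`: they are linked
by a finite chain of elementary homotopies in which every intermediate 1-path has
support in `A`. -/
def HomotopicIn {I : Type*} [DecidableEq I] (H A : Set (Finset I))
    (γ γ' : List (Finset I)) : Prop :=
  (IsKPath H 1 γ ∧ ∀ J ∈ γ, J ∈ A) ∧
    Relation.ReflTransGen
      (fun g₁ g₂ => ElemHomotopy H g₁ g₂ ∧ IsKPath H 1 g₂ ∧ ∀ J ∈ g₂, J ∈ A) γ γ'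

/-- A 1-connected subset `A ⊆ H(1)` is simply connected in `H`: any two 1-paths in `H`
with support in `A` joining the same strata are homotopically equivalent in `H` with
support in `A`. -/
def SimplyConnectedIn {I : Type*} [DecidableEq I] (H A : Set (Finset I)) : Prop :=
  KConnectedIn H 1 A ∧
    ∀ γ γ' : List (Finset I), IsKPath H 1 γ → IsKPath H 1 γ' →
      (∀ J ∈ γ, J ∈ A) → (∀ J ∈ γ', J ∈ A) →
      γ.head? = γ'.head? → γ.getLast? = γ'.getLast? →
      HomotopicIn H A γ γ'

/-- `H` is simply connected: `H(1)` is simply connected in `H`. -/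
def SimplyConnected {I : Type*} [DecidableEq I] (H : Set (Finset I)) : Prop :=
  SimplyConnectedIn H (level H 1)

/-- The closure of `A` in `H`: the strata of `H` containing some element of `A`. -/
def Cl {I : Type*} (H A : Set (Finset I)) : Set (Finset I) :=
  {J' ∈ H | ∃ J ∈ A, J ⊆ J'}

/-- A datum of nodal strata `(N, {P_J})` in `H`: a subset `N ⊆ H` together with, for each
`J ∈ N`, a partition `P_J = {J₊, J₋}` of `J` into two nonempty parts, such that for every
`J ∈ N` and `J' ⊆ J` one has `J' ∈ N` iff `J' ∩ J₊ ≠ ∅ ≠ J' ∩ J₋`, and in that case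
`P_{J'} = {J' ∩ J₊, J' ∩ J₋}`. -/
structure NodalDatum {I : Type*} [DecidableEq I] (H : Set (Finset I)) : Type _ where
  N : Set (Finset I)
  N_sub : N ⊆ H
  plus : Finset I → Finset I
  minus : Finset I → Finset I
  plus_nonempty : ∀ J ∈ N, (plus J).Nonempty
  minus_nonempty : ∀ J ∈ N, (minus J).Nonempty
  union_eq : ∀ J ∈ N, plus J ∪ minus J = J
  disj : ∀ J ∈ N, Disjoint (plus J) (minus J)
  mem_iff : ∀ J ∈ N, ∀ J' : Finset I, J' ⊆ J →
    (J' ∈ N ↔ (J' ∩ plus J).Nonempty ∧ (J' ∩ minus J).Nonempty)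
  part_eq : ∀ J ∈ N, ∀ J' : Finset I, J' ⊆ J → J' ∈ N →
    ({plus J', minus J'} : Set (Finset I)) = {J' ∩ plus J, J' ∩ minus J}

/-- `N*`: the set of uninterrupted nodal strata, i.e. `J ∈ N` with `Cl_H({J}) ⊆ N`. -/
def Nstar {I : Type*} [DecidableEq I] {H : Set (Finset I)} (D : NodalDatum H) :
    Set (Finset I) :=
  {J ∈ D.N | ∀ J' ∈ H, J ⊆ J' → J' ∈ D.N}

/-- A nodal block of `N` in `H`: a 2-connected component of `N(2) = N ∩ H(2)` in `H`. -/
def IsNodalBlock {I : Type*} [DecidableEq I] {H : Set (Finset I)} (D : NodalDatum H)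
    (B : Set (Finset I)) : Prop :=
  IsKComponent H 2 (D.N ∩ level H 2) B

/-- A nodal separating block: a nodal block contained in `N*`. -/
def IsSepBlock {I : Type*} [DecidableEq I] {H : Set (Finset I)} (D : NodalDatum H)
    (B : Set (Finset I)) : Prop :=
  IsNodalBlock D B ∧ B ⊆ Nstar D

/-- The separator set: the union of all nodal separating blocks. -/
def SepSet {I : Type*} [DecidableEq I] {H : Set (Finset I)} (D : NodalDatum H) :
    Set (Finset I) :=
  ⋃₀ {B | IsSepBlock D B}

/-- `A_B(i)`: the set of `{j} ∈ H(1)` joined to `{i}` by a 1-path `γ` in `H` with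
`κ_B(γ)` even. -/
def ABset {I : Type*} [DecidableEq I] (H B : Set (Finset I)) (i : I) : Set (Finset I) :=
  {J ∈ level H 1 | ∃ γ : List (Finset I),
    IsKPath H 1 γ ∧ Joins γ {i} J ∧ Even (kappa B γ)}

/-- `B_B(i)`: the set of `{j} ∈ H(1)` joined to `{i}` by a 1-path `γ` in `H` with
`κ_B(γ)` odd. -/
def BBset {I : Type*} [DecidableEq I] (H B : Set (Finset I)) (i : I) : Set (Finset I) :=
  {J ∈ level H 1 | ∃ γ : List (Finset I),
    IsKPath H 1 γ ∧ Joins γ {i} J ∧ Odd (kappa B γ)}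

/-!
The parity of `κ_B` is a homotopy invariant of 1-paths. Backtracking crosses the same edge
twice, so the only point is the triangle move: every triangle `K ∈ H(3)` has an even number of
edges in `B`. If `K ∉ N`, no edge of `K` is in `B ⊆ N*`. If `K ∈ N`, its nodal edges are those
joining `K₊` to `K₋`, and any two of them span `K`, hence are 2-adjacent and lie together in the
block `B` or outside it; pure edges are not nodal. Colouring the vertices of `K` by their side,
the nodal edges are the coboundary of that colouring, so their number is even.

Simple connectivity then makes the parity of a path from `{i}` to `{j}` depend only on `j`,
which gives disjointness; 1-connectivity gives the union; extending a path by an edge of `B`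
flips the parity, which gives nonemptiness.
-/

lemma union_eq_of_card_eq_succ {α : Type*} [DecidableEq α] {s t u : Finset α} {k : ℕ}
    (hs : s.card = k) (ht : t.card = k) (hst : s ≠ t) (hu : u.card = k + 1)
    (h : s ∪ t ⊆ u) : s ∪ t = u := by
  refine Finset.eq_of_subset_of_card_le h ?_
  have hts : ¬t ⊆ s := fun hts => hst (Finset.eq_of_subset_of_card_le hts (by omega)).symm
  have hlt : s.card < (s ∪ t).card :=
    Finset.card_lt_card (Finset.ssubset_iff_subset_ne.2 ⟨Finset.subset_union_left,
      fun heq => hts (heq ▸ Finset.subset_union_right)⟩)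
  omega

lemma IsCSS.singleton_mem_level_one {I : Type*} {H : Set (Finset I)} (hH : IsCSS H) (j : I) :
    ({j} : Finset I) ∈ level H 1 :=
  ⟨hH.2 j, Finset.card_singleton j⟩

lemma Joins.append {I : Type*} {γ₁ γ₂ : List (Finset I)} {J₁ J₂ J₃ J₄ : Finset I}
    (h₁ : Joins γ₁ J₁ J₂) (h₂ : Joins γ₂ J₃ J₄) : Joins (γ₁ ++ γ₂) J₁ J₄ :=
  ⟨by rw [List.head?_append, h₁.1]; rfl, by rw [List.getLast?_append, h₂.2]; rfl⟩

section Development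

variable {I : Type*} [DecidableEq I] {H : Set (Finset I)} {k : ℕ}

lemma IsKPath.singleton {J : Finset I} (h : J ∈ level H k) : IsKPath H k [J] :=
  ⟨List.cons_ne_nil _ _, by simpa using h, List.isChain_singleton _⟩

lemma IsKPath.append {γ₁ γ₂ : List (Finset I)} (h₁ : IsKPath H k γ₁) (h₂ : IsKPath H k γ₂)
    {J₁ J₂ : Finset I} (hl : γ₁.getLast? = some J₁) (hh : γ₂.head? = some J₂)
    (hu : J₁ ∪ J₂ ∈ level H (k + 1)) : IsKPath H k (γ₁ ++ γ₂) := by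
  refine ⟨by simp [h₁.1], fun J hJ => (List.mem_append.1 hJ).elim (h₁.2.1 J) (h₂.2.1 J), ?_⟩
  refine List.isChain_append.2 ⟨h₁.2.2, h₂.2.2, ?_⟩
  rintro x hx y hy
  rw [hl, Option.mem_some_iff] at hx
  rw [hh, Option.mem_some_iff] at hy
  exact hx ▸ hy ▸ hu

lemma KConnectedIn.insert_of_union_mem {C : Set (Finset I)} (hC : KConnectedIn H k C)
    {J₁ J₂ : Finset I} (h₁ : J₁ ∈ C) (h₂ : J₂ ∈ level H k) (hu : J₁ ∪ J₂ ∈ level H (k + 1)) :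
    KConnectedIn H k (insert J₂ C) := by
  have hto : ∀ x ∈ C, ∃ γ, IsKPath H k γ ∧ Joins γ x J₂ ∧ ∀ K ∈ γ, K ∈ insert J₂ C := by
    intro x hx
    obtain ⟨γ, hγ, hj, hs⟩ := hC x hx J₁ h₁
    refine ⟨γ ++ [J₂], hγ.append (.singleton h₂) hj.2 rfl hu, hj.append ⟨rfl, rfl⟩, ?_⟩
    simpa [or_imp, forall_and] using fun K hK => Or.inr (hs K hK)
  have hfrom : ∀ y ∈ C, ∃ γ, IsKPath H k γ ∧ Joins γ J₂ y ∧ ∀ K ∈ γ, K ∈ insert J₂ C := by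
    intro y hy
    obtain ⟨γ, hγ, hj, hs⟩ := hC J₁ h₁ y hy
    refine ⟨[J₂] ++ γ, (IsKPath.singleton h₂).append hγ rfl hj.1 (by rwa [Finset.union_comm]),
      Joins.append ⟨rfl, rfl⟩ hj, ?_⟩
    simpa [or_imp, forall_and] using fun K hK => Or.inr (hs K hK)
  rintro x (rfl | hx) y (rfl | hy)
  · exact ⟨[_], .singleton h₂, ⟨rfl, rfl⟩, by simp⟩
  · exact hfrom y hy
  · exact hto x hx
  · obtain ⟨γ, hγ, hj, hs⟩ := hC x hx y hy
    exact ⟨γ, hγ, hj, fun K hK => Set.mem_insert_of_mem _ (hs K hK)⟩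

lemma IsKComponent.mem_of_union_mem {A C : Set (Finset I)} (hC : IsKComponent H k A C)
    (hA : A ⊆ level H k) {J₁ J₂ : Finset I} (h₁ : J₁ ∈ C) (h₂ : J₂ ∈ A)
    (hu : J₁ ∪ J₂ ∈ level H (k + 1)) : J₂ ∈ C := by
  have hins : insert J₂ C ⊆ A := Set.insert_subset h₂ hC.2.1
  rw [← hC.2.2.2 _ (Set.subset_insert _ _) hins (hC.2.2.1.insert_of_union_mem h₁ (hA h₂) hu)]
  exact Set.mem_insert _ _

lemma IsKComponent.mem_of_union_subset {A C : Set (Finset I)} (hC : IsKComponent H k A C)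
    (hA : A ⊆ level H k) {J₁ J₂ K : Finset I} (h₁ : J₁ ∈ C) (h₂ : J₂ ∈ A)
    (hK : K ∈ level H (k + 1)) (hu : J₁ ∪ J₂ ⊆ K) : J₂ ∈ C := by
  by_cases heq : J₁ = J₂
  · exact heq ▸ h₁
  refine hC.mem_of_union_mem hA h₁ h₂ ?_
  rwa [union_eq_of_card_eq_succ (hA (hC.2.1 h₁)).2 (hA h₂).2 heq hK.2 hu]

lemma NodalDatum.mem_minus_iff (D : NodalDatum H) {K : Finset I} (hK : K ∈ D.N) {x : I}
    (hx : x ∈ K) : x ∈ D.minus K ↔ x ∉ D.plus K := by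
  rw [← D.union_eq K hK, Finset.mem_union] at hx
  have := @Finset.disjoint_left.1 (D.disj K hK) x
  tauto

lemma NodalDatum.pair_mem_iff (D : NodalDatum H) {K : Finset I} (hK : K ∈ D.N) {x y : I}
    (hx : x ∈ K) (hy : y ∈ K) :
    ({x, y} : Finset I) ∈ D.N ↔ (x ∈ D.plus K ↔ y ∉ D.plus K) := by
  have hinter : ∀ S : Finset I, (({x, y} : Finset I) ∩ S).Nonempty ↔ x ∈ S ∨ y ∈ S := by
    simp [Finset.Nonempty]
  rw [D.mem_iff K hK _ (Finset.insert_subset hx (Finset.singleton_subset_iff.2 hy)), hinter,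
    hinter, D.mem_minus_iff hK hx, D.mem_minus_iff hK hy]
  tauto

variable {D : NodalDatum H} {B : Set (Finset I)}

lemma IsSepBlock.pair_mem_iff_xor (hB : IsSepBlock D B) {K : Finset I} (hK : K ∈ level H 3)
    {a b c : I} (ha : a ∈ K) (hb : b ∈ K) (hc : c ∈ K) :
    ({a, b} : Finset I) ∈ B ↔ Xor (({a, c} : Finset I) ∈ B) (({c, b} : Finset I) ∈ B) := by
  have hsub : ∀ {x y : I}, x ∈ K → y ∈ K → ({x, y} : Finset I) ⊆ K :=
    fun hx hy => Finset.insert_subset hx (Finset.singleton_subset_iff.2 hy)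
  by_cases hKN : K ∈ D.N
  · have hedge : ∀ {x y : I}, x ∈ K → y ∈ K → (({x, y} : Finset I) ∈ B ↔
        (x ∈ D.plus K ↔ y ∉ D.plus K) ∧ ∃ x' ∈ K, ∃ y' ∈ K, ({x', y'} : Finset I) ∈ B) := by
      intro x y hx hy
      rw [← D.pair_mem_iff hKN hx hy]
      refine ⟨fun h => ⟨(hB.1.2.1 h).1, x, hx, y, hy, h⟩, ?_⟩
      rintro ⟨hN, x', hx', y', hy', h'⟩
      have hxy : x ≠ y := by
        rintro rfl
        have := (D.pair_mem_iff hKN hx hx).1 hN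
        tauto
      exact hB.1.mem_of_union_subset (fun _ h => h.2) h'
        ⟨hN, D.N_sub hN, Finset.card_pair hxy⟩ hK
        (Finset.union_subset (hsub hx' hy') (hsub hx hy))
    rw [hedge ha hb, hedge ha hc, hedge hc hb]
    by_cases hpa : a ∈ D.plus K <;> by_cases hpb : b ∈ D.plus K <;>
      by_cases hpc : c ∈ D.plus K <;> simp [Xor, hpa, hpb, hpc]
  · have hout : ∀ {x y : I}, x ∈ K → y ∈ K → ({x, y} : Finset I) ∉ B :=
      fun hx hy h => hKN ((hB.2 h).2 K hK.1 (hsub hx hy))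
    simp [hout ha hb, hout ha hc, hout hc hb, Xor]

/-- The middle term is the subsupport of the junction `[last l₁, head l₂]`, empty when either
list is. -/
lemma subSup_append (l₁ l₂ : List (Finset I)) :
    subSup (l₁ ++ l₂) =
      subSup l₁ ++ subSup (l₁.getLast?.toList ++ l₂.head?.toList) ++ subSup l₂ := by
  induction l₁ with
  | nil => cases l₂ <;> rfl
  | cons a t ih =>
    cases t with
    | nil => cases l₂ <;> rfl
    | cons b t =>
      change (a ∪ b) :: subSup (b :: t ++ l₂) = (a ∪ b) :: subSup (b :: t) ++ _ ++ _
      rw [ih, List.getLast?_cons_cons]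
      rfl

lemma kappa_append (B : Set (Finset I)) (l₁ l₂ : List (Finset I)) :
    kappa B (l₁ ++ l₂) =
      kappa B l₁ + kappa B (l₁.getLast?.toList ++ l₂.head?.toList) + kappa B l₂ := by
  simp only [kappa]
  rw [subSup_append, List.countP_append, List.countP_append]

lemma kappa_append_append_modEq (δ ρ : List (Finset I)) {ε ε' : List (Finset I)}
    (hh : ε.head? = ε'.head?) (hl : ε.getLast? = ε'.getLast?)
    (hk : kappa B ε ≡ kappa B ε' [MOD 2]) :
    kappa B (δ ++ ε ++ ρ) ≡ kappa B (δ ++ ε' ++ ρ) [MOD 2] := by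
  rw [kappa_append B (δ ++ ε), kappa_append B (δ ++ ε'), kappa_append B δ ε,
    kappa_append B δ ε', List.getLast?_append, List.getLast?_append, hh, hl]
  exact ((hk.add_left _).add_right _).add_right _

lemma ElemPairCore.endpoints_and_kappa_modEq (hB : IsSepBlock D B) {ε ε' : List (Finset I)}
    (h : ElemPairCore H ε ε') :
    ε.head? = ε'.head? ∧ ε.getLast? = ε'.getLast? ∧ kappa B ε ≡ kappa B ε' [MOD 2] := by
  rcases h with rfl | ⟨i₁, i₂, rfl, rfl⟩ | ⟨i₁, i₂, i₃, rfl, rfl, hp⟩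
  · exact ⟨rfl, rfl, rfl⟩
  · refine ⟨rfl, rfl, ?_⟩
    by_cases h : ({i₁, i₂} : Finset I) ∈ B <;>
      simp [kappa, subSup, Finset.union_comm {i₂}, h, Nat.ModEq]
  · refine ⟨rfl, rfl, ?_⟩
    have hK : ({i₁, i₃} ∪ {i₃, i₂} : Finset I) ∈ level H 3 :=
      (List.isChain_pair (R := fun J J' => J ∪ J' ∈ level H (2 + 1))).1 hp.2.2
    have hxor := hB.pair_mem_iff_xor hK (a := i₁) (b := i₂) (c := i₃)
      (by simp) (by simp) (by simp)
    by_cases h₁ : ({i₁, i₃} : Finset I) ∈ B <;> by_cases h₂ : ({i₃, i₂} : Finset I) ∈ B <;>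
      simp_all [kappa, subSup, Xor, Nat.ModEq]

lemma ElemHomotopy.kappa_modEq (hB : IsSepBlock D B) {γ₁ γ₂ : List (Finset I)}
    (h : ElemHomotopy H γ₁ γ₂) : kappa B γ₁ ≡ kappa B γ₂ [MOD 2] := by
  obtain ⟨δ, ε₁, ε₂, ρ, hpair, rfl, rfl⟩ := h
  obtain ⟨hh, hl, hk⟩ : ε₁.head? = ε₂.head? ∧ ε₁.getLast? = ε₂.getLast? ∧
      kappa B ε₁ ≡ kappa B ε₂ [MOD 2] := by
    rcases hpair with hp | hp
    · exact hp.endpoints_and_kappa_modEq hB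
    · obtain ⟨hh, hl, hk⟩ := hp.endpoints_and_kappa_modEq hB
      exact ⟨hh.symm, hl.symm, hk.symm⟩
  exact kappa_append_append_modEq δ ρ hh hl hk

lemma HomotopicIn.kappa_modEq (hB : IsSepBlock D B) {A : Set (Finset I)}
    {γ γ' : List (Finset I)} (h : HomotopicIn H A γ γ') : kappa B γ ≡ kappa B γ' [MOD 2] := by
  obtain ⟨-, h⟩ := h
  induction h with
  | refl => rfl
  | tail _ hstep ih => exact ih.trans (hstep.1.kappa_modEq hB)

lemma ABset_inter_BBset_eq_empty (hsc : SimplyConnected H) (hB : IsSepBlock D B) (i : I) :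
    ABset H B i ∩ BBset H B i = ∅ := by
  refine Set.eq_empty_of_forall_notMem ?_
  rintro J ⟨⟨-, γ, hγ, hj, hev⟩, -, γ', hγ', hj', hodd⟩
  have hmod := (hsc.2 γ γ' hγ hγ' hγ.2.1 hγ'.2.1 (hj.1.trans hj'.1.symm)
    (hj.2.trans hj'.2.symm)).kappa_modEq hB
  rw [Nat.even_iff] at hev
  rw [Nat.odd_iff] at hodd
  unfold Nat.ModEq at hmod
  omega

lemma ABset_union_BBset (hconn : OneConnected H) {i : I} (hi : ({i} : Finset I) ∈ level H 1) :
    ABset H B i ∪ BBset H B i = level H 1 := by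
  refine (Set.union_subset (fun _ h => h.1) (fun _ h => h.1)).antisymm fun J hJ => ?_
  obtain ⟨γ, hγ, hj, -⟩ := hconn _ hi J hJ
  exact (Nat.even_or_odd _).imp (fun h => ⟨hJ, γ, hγ, hj, h⟩) (fun h => ⟨hJ, γ, hγ, hj, h⟩)

lemma ABset_nonempty_and_BBset_nonempty (hH : IsCSS H) (hconn : OneConnected H) (i : I)
    {J : Finset I} (hJ : J ∈ level H 2) (hJB : J ∈ B) :
    (ABset H B i).Nonempty ∧ (BBset H B i).Nonempty := by
  obtain ⟨a, b, -, rfl⟩ := Finset.card_eq_two.1 hJ.2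
  have hsing := hH.singleton_mem_level_one
  obtain ⟨γ, hγ, hj, -⟩ := hconn _ (hsing i) _ (hsing a)
  have hγ' : IsKPath H 1 (γ ++ [{b}]) :=
    hγ.append (.singleton (hsing b)) hj.2 rfl (by rwa [← Finset.insert_eq])
  have hj' : Joins (γ ++ [{b}]) {i} {b} := hj.append ⟨rfl, rfl⟩
  have hk : kappa B (γ ++ [{b}]) = kappa B γ + 1 := by
    rw [kappa_append, hj.2]
    simp [kappa, subSup, hJB]
  rcases Nat.even_or_odd (kappa B γ) with h | h
  · exact ⟨⟨_, hsing a, γ, hγ, hj, h⟩, ⟨_, hsing b, _, hγ', hj', hk ▸ h.add_one⟩⟩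
  · exact ⟨⟨_, hsing b, _, hγ', hj', hk ▸ h.add_one⟩, ⟨_, hsing a, γ, hγ, hj, h⟩⟩

end Development

theorem ABset_BBset_partition_general
    {I : Type*} [DecidableEq I] (H : Set (Finset I))
    (hH : IsCSS H) (hsc : SimplyConnected H)
    (D : NodalDatum H) (B : Set (Finset I)) (hB : IsSepBlock D B) :
    ∀ i : I, (ABset H B i).Nonempty ∧ (BBset H B i).Nonempty ∧
      ABset H B i ∩ BBset H B i = ∅ ∧ ABset H B i ∪ BBset H B i = level H 1 := by
  intro i
  obtain ⟨J, hJB⟩ := hB.1.1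
  obtain ⟨hA, hB'⟩ := ABset_nonempty_and_BBset_nonempty hH hsc.1 i (hB.1.2.1 hJB).2 hJB
  exact ⟨hA, hB', ABset_inter_BBset_eq_empty hsc hB i,
    ABset_union_BBset hsc.1 (hH.singleton_mem_level_one i)⟩

/-- For a nodal separating block `B` of a simply connected combinatorial
strata structure and any `i ∈ I`, the sets `A_B(i)` and `B_B(i)` are nonempty, disjoint,
and their union is `H(1)`. -/
theorem ABset_BBset_partition
    {I : Type*} [Fintype I] [DecidableEq I] (H : Set (Finset I))
    (hH : IsCSS H) (hsc : SimplyConnected H)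
    (D : NodalDatum H) (B : Set (Finset I)) (hB : IsSepBlock D B) :
    ∀ i : I, (ABset H B i).Nonempty ∧ (BBset H B i).Nonempty ∧
      ABset H B i ∩ BBset H B i = ∅ ∧ ABset H B i ∪ BBset H B i = level H 1 :=
  ABset_BBset_partition_general H hH hsc D B hB
end

section
/- Let H be a simply connected combinatorial strata structure endowed with a datum (N, {P_J}) of nodal strata, and let B be a nodal separating block of N in H. Set H_B = H \ Cl_H(B). Then for every i ∈ I, the sets A_B(i) and B_B(i) are exactly the two 1-connected components of H(1) in H_B. -/
/-!
If a 3-stratum `T` of `H` contains an edge of the separating block `B`, then `T ∈ N`, one part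
of its partition is a single vertex `s`, and the nodal edges of `T` are the two edges through
`s`; as they are adjacent through `T`, maximality of the block puts both of them in `B`. So
every triangle has an even number of edges in `B`, the parity of `κ_B` is invariant under
elementary homotopies, and by simple connectivity it depends only on the endpoints of a path:
`A_B(i)` and `B_B(i)` are disjoint, and they cover `H(1)`.

Conversely, two adjacent edges `{s, u}, {s, w}` of `B` give an edge `{u, w} ∉ B`, so walking
along a 2-path in `B` transports the endpoints of one block edge to those of another without
crossing `B`. Hence two consecutive crossings of `B` along a 1-path can be removed, and a path
with `κ_B` even can be replaced by one avoiding `B`, that is, by a path of `H_B`. Thus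
`A_B(i)` and `B_B(i)` are the classes of `{i}` and of any vertex of `B_B(i)` under
connectedness in `H_B`.
-/

lemma List.isChain_and_iff {α : Type*} {R S : α → α → Prop} {l : List α} :
    l.IsChain (fun a b => R a b ∧ S a b) ↔ l.IsChain R ∧ l.IsChain S := by
  induction l with
  | nil => simp
  | cons a l ih =>
    cases l with
    | nil => simp
    | cons b l => simp only [List.isChain_cons_cons, ih]; tauto

section Kappa

variable {I : Type*} [DecidableEq I] {B : Set (Finset I)}

@[simp] lemma kappa_singleton (a : Finset I) : kappa B [a] = 0 := rfl

lemma kappa_cons_cons_of_mem {a b : Finset I} (l : List (Finset I)) (h : a ∪ b ∈ B) :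
    kappa B (a :: b :: l) = kappa B (b :: l) + 1 := by
  simp [kappa, subSup, h]

lemma kappa_cons_cons_of_notMem {a b : Finset I} (l : List (Finset I)) (h : a ∪ b ∉ B) :
    kappa B (a :: b :: l) = kappa B (b :: l) := by
  simp [kappa, subSup, h]

lemma kappa_append_cons (l r : List (Finset I)) (a : Finset I) :
    kappa B (l ++ a :: r) = kappa B (l ++ [a]) + kappa B (a :: r) := by
  induction l with
  | nil => simp
  | cons x l ih =>
    cases l with
    | nil =>
      by_cases h : x ∪ a ∈ B
      · simp only [List.cons_append, List.nil_append, kappa_cons_cons_of_mem _ h, kappa_singleton]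
        omega
      · simp [kappa_cons_cons_of_notMem _ h]
    | cons y l =>
      by_cases h : x ∪ y ∈ B
      · simp only [List.cons_append, kappa_cons_cons_of_mem _ h] at ih ⊢; omega
      · simpa only [List.cons_append, kappa_cons_cons_of_notMem _ h] using ih

lemma kappa_reverse (l : List (Finset I)) : kappa B l.reverse = kappa B l := by
  induction l with
  | nil => rfl
  | cons a l ih =>
    cases l with
    | nil => rfl
    | cons b m =>
      rw [show (a :: b :: m).reverse = m.reverse ++ b :: [a] by simp, kappa_append_cons,
        ← List.reverse_cons, ih, show a :: b :: m = [a] ++ b :: m from rfl, kappa_append_cons]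
      simp [kappa, subSup, Finset.union_comm, Nat.add_comm]

lemma kappa_eq_zero_iff {γ : List (Finset I)} :
    kappa B γ = 0 ↔ γ.IsChain fun a b => a ∪ b ∉ B := by
  induction γ with
  | nil => simp [kappa, subSup]
  | cons a l ih =>
    cases l with
    | nil => simp
    | cons b l =>
      by_cases h : a ∪ b ∈ B
      · simp [kappa_cons_cons_of_mem _ h, h]
      · simp [kappa_cons_cons_of_notMem _ h, h, ih]

end Kappa

section Joins

variable {I : Type*} {γ γ₁ γ₂ : List (Finset I)} {x y z : Finset I}

lemma Joins.ne_nil (h : Joins γ x y) : γ ≠ [] := by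
  rintro rfl; simp [Joins] at h

lemma Joins.head_mem (h : Joins γ x y) : x ∈ γ := List.mem_of_mem_head? h.1

lemma Joins.last_mem (h : Joins γ x y) : y ∈ γ := List.mem_of_getLast? h.2

lemma Joins.reverse (h : Joins γ x y) : Joins γ.reverse y x :=
  ⟨by rw [List.head?_reverse]; exact h.2, by rw [List.getLast?_reverse]; exact h.1⟩

lemma Joins.prefix {s t : List (Finset I)} (h : Joins (s ++ z :: t) x y) :
    Joins (s ++ [z]) x z := by
  refine ⟨?_, by simp⟩
  simpa [List.head?_append] using h.1

lemma Joins.append_tail (j₁ : Joins γ₁ x y) (j₂ : Joins γ₂ y z) :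
    Joins (γ₁ ++ γ₂.tail) x z := by
  obtain ⟨d, rfl⟩ := List.getLast?_eq_some_iff.1 j₁.2
  obtain ⟨t, rfl⟩ := List.head?_eq_some_iff.1 j₂.1
  refine ⟨by simpa [List.head?_append] using j₁.1, ?_⟩
  simpa [List.getLast?_append, List.getLast?_cons] using j₂.2

end Joins

section Paths

variable {I : Type*} [DecidableEq I] {H : Set (Finset I)} {k : ℕ}
  {γ γ₁ γ₂ : List (Finset I)} {x y z : Finset I}

lemma IsKPath.infix {γ' : List (Finset I)} (h : IsKPath H k γ) (hinf : γ' <:+: γ)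
    (hne : γ' ≠ []) : IsKPath H k γ' :=
  ⟨hne, fun J hJ => h.2.1 J (hinf.subset hJ), h.2.2.infix hinf⟩

lemma IsKPath.reverse (h : IsKPath H k γ) : IsKPath H k γ.reverse := by
  refine ⟨by simpa using h.1, fun J hJ => h.2.1 J (List.mem_reverse.1 hJ), ?_⟩
  exact List.isChain_reverse.2 (h.2.2.imp fun a b hab => by rwa [Finset.union_comm])

lemma IsKPath.append_tail (h₁ : IsKPath H k γ₁) (h₂ : IsKPath H k γ₂)
    (j₁ : Joins γ₁ x y) (j₂ : Joins γ₂ y z) : IsKPath H k (γ₁ ++ γ₂.tail) := by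
  obtain ⟨d, rfl⟩ := List.getLast?_eq_some_iff.1 j₁.2
  obtain ⟨t, rfl⟩ := List.head?_eq_some_iff.1 j₂.1
  refine ⟨by simp, fun J hJ => ?_, h₁.2.2.append_overlap h₂.2.2 (by simp)⟩
  rcases List.mem_append.1 hJ with hJ | hJ
  · exact h₁.2.1 J hJ
  · exact h₂.2.1 J (List.mem_cons_of_mem _ hJ)

lemma kappa_append_tail (B : Set (Finset I)) (j₁ : Joins γ₁ x y) (j₂ : Joins γ₂ y z) :
    kappa B (γ₁ ++ γ₂.tail) = kappa B γ₁ + kappa B γ₂ := by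
  obtain ⟨d, rfl⟩ := List.getLast?_eq_some_iff.1 j₁.2
  obtain ⟨t, rfl⟩ := List.head?_eq_some_iff.1 j₂.1
  simpa using kappa_append_cons d t y

lemma isKPath_singleton (hx : x ∈ level H k) : IsKPath H k [x] :=
  ⟨by simp, by simpa using hx, List.isChain_singleton _⟩

lemma isKPath_pair (hx : x ∈ level H k) (hy : y ∈ level H k) (hxy : x ∪ y ∈ level H (k + 1)) :
    IsKPath H k [x, y] :=
  ⟨by simp, by simp [hx, hy], List.isChain_cons_cons.2 ⟨hxy, List.isChain_singleton _⟩⟩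

end Paths

section Components

variable {I : Type*} [DecidableEq I] {H A C C' : Set (Finset I)} {k : ℕ} {u v w : Finset I}

def KJoinedIn (H : Set (Finset I)) (k : ℕ) (A : Set (Finset I)) (u v : Finset I) : Prop :=
  ∃ γ, IsKPath H k γ ∧ Joins γ u v ∧ ∀ K ∈ γ, K ∈ A

lemma KJoinedIn.refl (hu : u ∈ level H k) (huA : u ∈ A) : KJoinedIn H k A u u :=
  ⟨[u], isKPath_singleton hu, ⟨rfl, rfl⟩, by simpa using huA⟩

lemma KJoinedIn.symm (h : KJoinedIn H k A u v) : KJoinedIn H k A v u := by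
  obtain ⟨γ, hγ, hj, hA⟩ := h
  exact ⟨γ.reverse, hγ.reverse, hj.reverse, fun K hK => hA K (List.mem_reverse.1 hK)⟩

lemma KJoinedIn.trans (h₁ : KJoinedIn H k A u v) (h₂ : KJoinedIn H k A v w) :
    KJoinedIn H k A u w := by
  obtain ⟨γ₁, hγ₁, j₁, hA₁⟩ := h₁
  obtain ⟨γ₂, hγ₂, j₂, hA₂⟩ := h₂
  refine ⟨γ₁ ++ γ₂.tail, hγ₁.append_tail hγ₂ j₁ j₂, j₁.append_tail j₂, fun K hK => ?_⟩
  rcases List.mem_append.1 hK with hK | hK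
  · exact hA₁ K hK
  · exact hA₂ K (List.mem_of_mem_tail hK)

lemma KJoinedIn.mem (h : KJoinedIn H k A u v) : v ∈ A := by
  obtain ⟨γ, -, hj, hA⟩ := h
  exact hA v hj.last_mem

lemma KJoinedIn.of_mem_path {γ : List (Finset I)} (hγ : IsKPath H k γ) (hj : Joins γ u v)
    (hA : ∀ K ∈ γ, K ∈ A) {K : Finset I} (hK : K ∈ γ) : KJoinedIn H k A u K := by
  obtain ⟨s, t, rfl⟩ := List.mem_iff_append.1 hK
  refine ⟨s ++ [K], hγ.infix ⟨[], t, by simp⟩ (by simp), hj.prefix, fun K' hK' => hA K' ?_⟩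
  simp only [List.mem_append, List.mem_cons] at hK' ⊢
  tauto

lemma KConnectedIn.kJoinedIn (hC : KConnectedIn H k C) (hCA : C ⊆ A) (hu : u ∈ C)
    (hv : v ∈ C) : KJoinedIn H k A u v := by
  obtain ⟨γ, hγ, hj, hsupp⟩ := hC u hu v hv
  exact ⟨γ, hγ, hj, fun K hK => hCA (hsupp K hK)⟩

lemma KConnectedIn.subset_level (hC : KConnectedIn H k C) : C ⊆ level H k := by
  intro u hu
  obtain ⟨γ, hγ, hj, -⟩ := hC u hu u hu
  exact hγ.2.1 u hj.head_mem

lemma kConnectedIn_setOf_kJoinedIn : KConnectedIn H k {v | KJoinedIn H k A u v} := by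
  intro v hv w hw
  obtain ⟨γ, hγ, hj, hA⟩ := hv.symm.trans hw
  exact ⟨γ, hγ, hj, fun K hK => hv.trans (KJoinedIn.of_mem_path hγ hj hA hK)⟩

lemma isKComponent_setOf_kJoinedIn (hu : u ∈ level H k) (huA : u ∈ A) :
    IsKComponent H k A {v | KJoinedIn H k A u v} := by
  refine ⟨⟨u, KJoinedIn.refl hu huA⟩, fun v hv => hv.mem, kConnectedIn_setOf_kJoinedIn,
    fun C' hsub hC'A hC' => ?_⟩
  have huC' : u ∈ C' := hsub (KJoinedIn.refl hu huA)
  exact Set.Subset.antisymm (fun v hv => hC'.kJoinedIn hC'A huC' hv) hsub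

lemma IsKComponent.eq_setOf_kJoinedIn (hC : IsKComponent H k A C) (hu : u ∈ C) :
    C = {v | KJoinedIn H k A u v} := by
  have hsub : C ⊆ {v | KJoinedIn H k A u v} := fun v hv => hC.2.2.1.kJoinedIn hC.2.1 hu hv
  exact (hC.2.2.2 _ hsub (fun v hv => hv.mem) kConnectedIn_setOf_kJoinedIn).symm

lemma IsKComponent.eq_of_mem (hC : IsKComponent H k A C) (hC' : IsKComponent H k A C')
    (hu : u ∈ C) (hu' : u ∈ C') : C = C' :=
  (hC.eq_setOf_kJoinedIn hu).trans (hC'.eq_setOf_kJoinedIn hu').symm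

lemma IsKComponent.mem_of_adj (hC : IsKComponent H k A C) {E F : Finset I} (hE : E ∈ C)
    (hF : F ∈ A) (hFk : F ∈ level H k) (hEF : E ∪ F ∈ level H (k + 1)) : F ∈ C := by
  rw [hC.eq_setOf_kJoinedIn hE]
  refine ⟨[E, F], isKPath_pair (hC.2.2.1.subset_level hE) hFk hEF, ⟨rfl, rfl⟩, ?_⟩
  simp [hC.2.1 hE, hF]

end Components

section Avoiding

variable {I : Type*} {H B : Set (Finset I)}

lemma mem_cl_iff_of_card_le (hB : ∀ J ∈ B, J.card = 2) {J : Finset I} (hJ : J.card ≤ 2) :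
    J ∈ Cl H B ↔ J ∈ H ∧ J ∈ B := by
  refine ⟨fun ⟨hJH, J', hJ'B, hJ'J⟩ => ⟨hJH, ?_⟩, fun ⟨hJH, hJB⟩ => ⟨hJH, J, hJB, le_rfl⟩⟩
  rwa [← Finset.eq_of_subset_of_card_le hJ'J (by rw [hB J' hJ'B]; exact hJ)]

lemma level_diff_cl_one (hB : ∀ J ∈ B, J.card = 2) : level (H \ Cl H B) 1 = level H 1 := by
  ext J
  simp only [level, Set.mem_sdiff]
  constructor
  · exact fun h => ⟨h.1.1, h.2⟩
  · rintro ⟨hJH, hJ⟩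
    refine ⟨⟨hJH, fun hcl => ?_⟩, hJ⟩
    have := hB J ((mem_cl_iff_of_card_le hB (by omega)).1 hcl).2
    omega

lemma mem_level_diff_cl_two (hB : ∀ J ∈ B, J.card = 2) {J : Finset I} :
    J ∈ level (H \ Cl H B) 2 ↔ J ∈ level H 2 ∧ J ∉ B := by
  simp only [level, Set.mem_sdiff]
  constructor
  · rintro ⟨⟨hJH, hcl⟩, hJ⟩
    exact ⟨⟨hJH, hJ⟩, fun hJB => hcl ⟨hJH, J, hJB, le_rfl⟩⟩
  · rintro ⟨⟨hJH, hJ⟩, hJB⟩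
    exact ⟨⟨hJH, fun hcl => hJB ((mem_cl_iff_of_card_le hB hJ.le).1 hcl).2⟩, hJ⟩

lemma isKPath_diff_cl_iff [DecidableEq I] (hB : ∀ J ∈ B, J.card = 2) {γ : List (Finset I)} :
    IsKPath (H \ Cl H B) 1 γ ↔ IsKPath H 1 γ ∧ kappa B γ = 0 := by
  have h2 (a b : Finset I) : a ∪ b ∈ level (H \ Cl H B) (1 + 1) ↔
      a ∪ b ∈ level H (1 + 1) ∧ a ∪ b ∉ B := mem_level_diff_cl_two hB
  simp only [IsKPath, level_diff_cl_one hB, h2, kappa_eq_zero_iff]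
  exact ⟨fun ⟨hne, hlev, hc⟩ => ⟨⟨hne, hlev, hc.imp fun _ _ h => h.1⟩, hc.imp fun _ _ h => h.2⟩,
    fun ⟨⟨hne, hlev, hc⟩, hc'⟩ => ⟨hne, hlev, List.isChain_and_iff.2 ⟨hc, hc'⟩⟩⟩

end Avoiding

section Nodal

variable {I : Type*} [DecidableEq I] {H B : Set (Finset I)} {D : NodalDatum H} {T : Finset I}

lemma NodalDatum.exists_pivot (hT : T ∈ D.N) (hc : T.card = 3) :
    ∃ s ∈ T, ∀ e ⊆ T, e.card = 2 → (e ∈ D.N ↔ s ∈ e) := by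
  have of_part (P M : Finset I) (hPM : P ∪ M = T) (hP : P.card = 1)
      (hN : ∀ e ⊆ T, e ∈ D.N ↔ (e ∩ P).Nonempty ∧ (e ∩ M).Nonempty) :
      ∃ s ∈ T, ∀ e ⊆ T, e.card = 2 → (e ∈ D.N ↔ s ∈ e) := by
    obtain ⟨s, rfl⟩ := Finset.card_eq_one.1 hP
    refine ⟨s, by simp [← hPM], fun e heT he => ?_⟩
    rw [hN e heT]
    refine ⟨fun ⟨⟨t, ht⟩, _⟩ => ?_, fun hs => ?_⟩
    · simp only [Finset.mem_inter, Finset.mem_singleton] at ht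
      exact ht.2 ▸ ht.1
    · obtain ⟨t, ht, hts⟩ := Finset.exists_mem_ne (by omega : 1 < e.card) s
      have htM : t ∈ M := by simpa [← hPM, hts] using heT ht
      exact ⟨⟨s, by simp [hs]⟩, ⟨t, Finset.mem_inter.2 ⟨ht, htM⟩⟩⟩
  have hcard : (D.plus T).card + (D.minus T).card = 3 := by
    rw [← Finset.card_union_of_disjoint (D.disj T hT), D.union_eq T hT, hc]
  have hp := (D.plus_nonempty T hT).card_pos
  have hm := (D.minus_nonempty T hT).card_pos
  rcases (by omega : (D.plus T).card = 1 ∨ (D.minus T).card = 1) with h1 | h1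
  · exact of_part _ _ (D.union_eq T hT) h1 (D.mem_iff T hT)
  · refine of_part _ _ (by rw [Finset.union_comm, D.union_eq T hT]) h1 fun e he => ?_
    rw [D.mem_iff T hT e he, and_comm]

lemma IsSepBlock.card_eq_two (hB : IsSepBlock D B) : ∀ J ∈ B, J.card = 2 :=
  fun _ hJ => (hB.1.2.1 hJ).2.2

lemma IsSepBlock.exists_pivot (hB : IsSepBlock D B) (hT : T ∈ level H 3) {e₀ : Finset I}
    (he₀ : e₀ ∈ B) (he₀T : e₀ ⊆ T) : ∃ s ∈ T, ∀ e ⊆ T, e.card = 2 → (e ∈ B ↔ s ∈ e) := by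
  obtain ⟨s, hsT, hs⟩ := NodalDatum.exists_pivot ((hB.2 he₀).2 T hT.1 he₀T) hT.2
  refine ⟨s, hsT, fun e heT he => ⟨fun heB => (hs e heT he).1 (hB.1.2.1 heB).1, fun hse => ?_⟩⟩
  have heN : e ∈ D.N := (hs e heT he).2 hse
  by_cases hee : e = e₀
  · exact hee ▸ he₀
  have hunion : e₀ ∪ e = T := by
    refine Finset.eq_of_subset_of_card_le (Finset.union_subset he₀T heT) ?_
    by_contra! hlt
    have h₀ := Finset.eq_of_subset_of_card_le (Finset.subset_union_left (s₂ := e))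
      (by rw [hB.card_eq_two e₀ he₀]; have := hT.2; omega)
    have h₁ := Finset.eq_of_subset_of_card_le (Finset.subset_union_right (s₁ := e₀))
      (by rw [he]; have := hT.2; omega)
    exact hee (h₁.trans h₀.symm)
  have heH : e ∈ level H 2 := ⟨D.N_sub heN, he⟩
  exact hB.1.mem_of_adj he₀ ⟨heN, heH⟩ heH (hunion ▸ hT)

end Nodal

section Parity

variable {I : Type*} [DecidableEq I] {H B : Set (Finset I)} {D : NodalDatum H}

lemma kappa_backtrack_mod_two (a b : I) : kappa B [{a}, {b}, {a}] % 2 = kappa B [{a}] % 2 := by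
  simp only [kappa, subSup, List.tail_cons, List.zipWith_cons_cons, List.zipWith_nil_right,
    List.countP_cons, List.countP_nil, Finset.union_comm {b} {a}]
  split <;> omega

lemma IsSepBlock.kappa_triangle_mod_two (hB : IsSepBlock D B) {a b c : I}
    (hT : ({a, c} ∪ {c, b} : Finset I) ∈ level H 3) :
    kappa B [{a}, {c}, {b}] % 2 = kappa B [{a}, {b}] % 2 := by
  have hT' : ({a, c} ∪ {c, b} : Finset I) = {a, b, c} := by
    ext; simp only [Finset.mem_union, Finset.mem_insert, Finset.mem_singleton]; tauto
  rw [hT'] at hT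
  have hcard := hT.2
  have pair_card_ne (x y : I) : ({x, y} : Finset I).card ≠ 3 := by
    have := Finset.card_le_two (a := x) (b := y); omega
  have hab : a ≠ b := by rintro rfl; exact pair_card_ne a c (by simpa using hcard)
  have hac : a ≠ c := by rintro rfl; exact pair_card_ne b a (by simpa using hcard)
  have hbc : b ≠ c := by rintro rfl; exact pair_card_ne a b (by simpa using hcard)
  have sub_ab : ({a, b} : Finset I) ⊆ {a, b, c} := by simp [Finset.insert_subset_iff]
  have sub_ac : ({a, c} : Finset I) ⊆ {a, b, c} := by simp [Finset.insert_subset_iff]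
  have sub_cb : ({c, b} : Finset I) ⊆ {a, b, c} := by simp [Finset.insert_subset_iff]
  by_cases hsome : ({a, b} : Finset I) ∈ B ∨ ({a, c} : Finset I) ∈ B ∨ ({c, b} : Finset I) ∈ B
  · obtain ⟨e₀, he₀, he₀T⟩ : ∃ e₀ ∈ B, e₀ ⊆ {a, b, c} := by
      rcases hsome with h | h | h
      exacts [⟨_, h, sub_ab⟩, ⟨_, h, sub_ac⟩, ⟨_, h, sub_cb⟩]
    obtain ⟨s, hsT, hs⟩ := hB.exists_pivot hT he₀ he₀T
    have mab := hs _ sub_ab (Finset.card_pair hab)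
    have mac := hs _ sub_ac (Finset.card_pair hac)
    have mcb := hs _ sub_cb (Finset.card_pair hbc.symm)
    simp only [Finset.mem_insert, Finset.mem_singleton] at hsT mab mac mcb
    rcases hsT with rfl | rfl | rfl <;>
      simp [kappa, subSup, mab, mac, mcb, hab, hac, hbc, hab.symm, hac.symm, hbc.symm]
  · push Not at hsome
    simp [kappa, subSup, hsome.1, hsome.2.1, hsome.2.2]

lemma kappa_append_append {ε : List (Finset I)} {x y : Finset I} (hε : Joins ε x y)
    (δ ρ : List (Finset I)) :
    kappa B (δ ++ ε ++ ρ) = kappa B (δ ++ [x]) + kappa B ε + kappa B (y :: ρ) := by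
  obtain ⟨t, rfl⟩ := List.head?_eq_some_iff.1 hε.1
  obtain ⟨d, hd⟩ := List.getLast?_eq_some_iff.1 hε.2
  have h₁ : kappa B (δ ++ x :: t ++ ρ) = kappa B (δ ++ [x]) + kappa B (x :: t ++ ρ) := by
    rw [List.append_assoc, List.cons_append, kappa_append_cons]
  have h₂ : kappa B (x :: t ++ ρ) = kappa B (x :: t) + kappa B (y :: ρ) := by
    rw [hd, List.append_assoc, List.singleton_append, kappa_append_cons]
  omega

lemma IsSepBlock.kappa_mod_two_eq_of_elemPairCore (hB : IsSepBlock D B) {ε ε' : List (Finset I)}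
    (h : ElemPairCore H ε ε') (δ ρ : List (Finset I)) :
    kappa B (δ ++ ε ++ ρ) % 2 = kappa B (δ ++ ε' ++ ρ) % 2 := by
  rcases h with rfl | ⟨a, b, rfl, rfl⟩ | ⟨a, b, c, rfl, rfl, hp⟩
  · rfl
  · rw [kappa_append_append (x := {a}) (y := {a}) ⟨rfl, rfl⟩,
      kappa_append_append (x := {a}) (y := {a}) ⟨rfl, rfl⟩]
    have := kappa_backtrack_mod_two (B := B) a b
    omega
  · rw [kappa_append_append (x := {a}) (y := {b}) ⟨rfl, rfl⟩,
      kappa_append_append (x := {a}) (y := {b}) ⟨rfl, rfl⟩]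
    have := hB.kappa_triangle_mod_two (List.isChain_cons_cons.1 hp.2.2).1
    omega

lemma IsSepBlock.kappa_mod_two_eq_of_homotopicIn (hB : IsSepBlock D B) {A : Set (Finset I)}
    {γ γ' : List (Finset I)} (h : HomotopicIn H A γ γ') :
    kappa B γ % 2 = kappa B γ' % 2 := by
  obtain ⟨-, hrel⟩ := h
  induction hrel with
  | refl => rfl
  | tail _ hstep ih =>
    obtain ⟨δ, ε₁, ε₂, ρ, hpair | hpair, rfl, rfl⟩ := hstep.1
    · exact ih.trans (hB.kappa_mod_two_eq_of_elemPairCore hpair δ ρ)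
    · exact ih.trans (hB.kappa_mod_two_eq_of_elemPairCore hpair δ ρ).symm

lemma SimplyConnected.kappa_mod_two_eq (hsc : SimplyConnected H) (hB : IsSepBlock D B)
    {γ γ' : List (Finset I)} {x y : Finset I} (hγ : IsKPath H 1 γ) (hγ' : IsKPath H 1 γ')
    (j : Joins γ x y) (j' : Joins γ' x y) : kappa B γ % 2 = kappa B γ' % 2 :=
  hB.kappa_mod_two_eq_of_homotopicIn (hsc.2 γ γ' hγ hγ' hγ.2.1 hγ'.2.1
    (j.1.trans j'.1.symm) (j.2.trans j'.2.symm))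

end Parity

section Crossing

variable {I : Type*} [DecidableEq I] {H B : Set (Finset I)} {D : NodalDatum H}

abbrev JoinedOutside (H B : Set (Finset I)) (u v : Finset I) : Prop :=
  KJoinedIn (H \ Cl H B) 1 (level H 1) u v

lemma IsSepBlock.joinedOutside_refl (hB : IsSepBlock D B) {u : Finset I} (hu : u ∈ level H 1) :
    JoinedOutside H B u u :=
  KJoinedIn.refl (by rwa [level_diff_cl_one hB.card_eq_two]) hu

lemma IsSepBlock.joinedOutside_iff (hB : IsSepBlock D B) {u v : Finset I} :
    JoinedOutside H B u v ↔ ∃ γ, IsKPath H 1 γ ∧ Joins γ u v ∧ kappa B γ = 0 := by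
  simp only [JoinedOutside, KJoinedIn, isKPath_diff_cl_iff hB.card_eq_two]
  exact ⟨fun ⟨γ, ⟨hγ, h0⟩, hj, _⟩ => ⟨γ, hγ, hj, h0⟩,
    fun ⟨γ, hγ, hj, h0⟩ => ⟨γ, ⟨hγ, h0⟩, hj, hγ.2.1⟩⟩

lemma IsSepBlock.joinedOutside_pair (hH : IsCSS H) (hB : IsSepBlock D B) {x y : I}
    (hxy : ({x, y} : Finset I) ∈ level H 2) (hxyB : ({x, y} : Finset I) ∉ B) :
    JoinedOutside H B {x} {y} := by
  refine hB.joinedOutside_iff.2 ⟨[{x}, {y}], isKPath_pair ⟨hH.2 x, rfl⟩ ⟨hH.2 y, rfl⟩ hxy,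
    ⟨rfl, rfl⟩, ?_⟩
  simp [kappa, subSup, hxyB]

lemma IsSepBlock.transport_step (hH : IsCSS H) (hB : IsSepBlock D B) {E F : Finset I}
    (hE : E ∈ B) (hF : F ∈ B) (hEF : E ∪ F ∈ level H 3) {x : I} (hx : x ∈ E) :
    ∃ y ∈ F, JoinedOutside H B {x} {y} := by
  by_cases hxF : x ∈ F
  · exact ⟨x, hxF, hB.joinedOutside_refl ⟨hH.2 x, rfl⟩⟩
  obtain ⟨s, -, hs⟩ := hB.exists_pivot hEF hE Finset.subset_union_left
  have hsE : s ∈ E := (hs E Finset.subset_union_left (hB.card_eq_two E hE)).1 hE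
  have hsF : s ∈ F := (hs F Finset.subset_union_right (hB.card_eq_two F hF)).1 hF
  obtain ⟨y, hyF, hyE⟩ : ∃ y ∈ F, y ∉ E := by
    by_contra! hFE
    have := hEF.2
    rw [Finset.union_eq_left.2 hFE, hB.card_eq_two E hE] at this
    omega
  have hxy : x ≠ y := by rintro rfl; exact hxF hyF
  have hsub : ({x, y} : Finset I) ⊆ E ∪ F := by
    simp [Finset.insert_subset_iff, hx, hyF]
  refine ⟨y, hyF, hB.joinedOutside_pair hH ⟨hH.1 _ hEF.1 _ hsub, Finset.card_pair hxy⟩ ?_⟩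
  rw [hs _ hsub (Finset.card_pair hxy)]
  simp only [Finset.mem_insert, Finset.mem_singleton, not_or]
  exact ⟨fun h => hxF (h ▸ hsF), fun h => hyE (h ▸ hsE)⟩

lemma IsSepBlock.transport (hH : IsCSS H) (hB : IsSepBlock D B) {γ : List (Finset I)}
    (hγ : IsKPath H 2 γ) (hγB : ∀ K ∈ γ, K ∈ B) {E F : Finset I} (hj : Joins γ E F)
    {x : I} (hx : x ∈ E) : ∃ y ∈ F, JoinedOutside H B {x} {y} := by
  induction γ generalizing E x with
  | nil => exact absurd rfl hj.ne_nil
  | cons E' l ih =>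
    obtain rfl : E' = E := by simpa using hj.1
    cases l with
    | nil =>
      obtain rfl : E' = F := by simpa using hj.2
      exact ⟨x, hx, hB.joinedOutside_refl ⟨hH.2 x, rfl⟩⟩
    | cons G l =>
      obtain ⟨z, hzG, hxz⟩ := hB.transport_step hH (hγB E' (by simp)) (hγB G (by simp))
        (List.isChain_cons_cons.1 hγ.2.2).1 hx
      obtain ⟨y, hyF, hzy⟩ := ih (hγ.infix (List.suffix_cons _ _).isInfix (by simp))
        (fun K hK => hγB K (List.mem_cons_of_mem _ hK)) ⟨rfl, by simpa using hj.2⟩ hzG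
      exact ⟨y, hyF, hxz.trans hzy⟩

/-- Transport inside the 2-connected block matches the two sides of any two of its edges. -/
lemma IsSepBlock.joinedOutside_cross (hH : IsCSS H) (hB : IsSepBlock D B) {a b c d : I}
    (hab : ({a, b} : Finset I) ∈ B) (hcd : ({c, d} : Finset I) ∈ B)
    (hbc : JoinedOutside H B {b} {c}) : JoinedOutside H B {a} {d} := by
  obtain ⟨γ, hγ, hj, hγB⟩ := hB.1.2.2.1 _ hab _ hcd
  obtain ⟨y, hy, hay⟩ := hB.transport hH hγ hγB hj (by simp : a ∈ ({a, b} : Finset I))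
  simp only [Finset.mem_insert, Finset.mem_singleton] at hy
  rcases hy with rfl | rfl
  · have hab' : JoinedOutside H B {a} {b} := hay.trans hbc.symm
    obtain ⟨δ, hδ, hjδ, hδB⟩ := hB.1.2.2.1 _ hcd _ hab
    obtain ⟨z, hz, hdz⟩ := hB.transport hH hδ hδB hjδ (by simp : d ∈ ({y, d} : Finset I))
    simp only [Finset.mem_insert, Finset.mem_singleton] at hz
    rcases hz with rfl | rfl
    · exact hdz.symm
    · exact hab'.trans hdz.symm
  · exact hay

end Crossing

section Classes

variable {I : Type*} [DecidableEq I] {H B : Set (Finset I)} {D : NodalDatum H}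

/-- Walking along a 1-path, a crossing of `B` takes a vertex to the other side of a block
edge, and two crossings cancel by `IsSepBlock.joinedOutside_cross`. -/
lemma IsSepBlock.joinedOutside_of_even_and_across_of_odd (hH : IsCSS H) (hB : IsSepBlock D B)
    {γ : List (Finset I)} (hγ : IsKPath H 1 γ) {u v : Finset I} (hj : Joins γ u v) :
    (Even (kappa B γ) → JoinedOutside H B u v) ∧
      (Odd (kappa B γ) → ∃ a b : I, ({a, b} : Finset I) ∈ B ∧
        JoinedOutside H B u {a} ∧ JoinedOutside H B {b} v) := by
  induction γ generalizing u with
  | nil => exact absurd rfl hj.ne_nil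
  | cons x l ih =>
    obtain rfl : x = u := by simpa using hj.1
    cases l with
    | nil =>
      obtain rfl : x = v := by simpa using hj.2
      exact ⟨fun _ => hB.joinedOutside_refl (hγ.2.1 x (by simp)), fun h => by simp at h⟩
    | cons y r =>
      obtain ⟨hxy, hγ'⟩ := List.isChain_cons_cons.1 hγ.2.2
      obtain ⟨hev, hodd⟩ := ih (hγ.infix (List.suffix_cons _ _).isInfix (by simp))
        ⟨rfl, by simpa using hj.2⟩
      obtain ⟨a, rfl⟩ := Finset.card_eq_one.1 (hγ.2.1 x (by simp)).2
      obtain ⟨b, rfl⟩ := Finset.card_eq_one.1 (hγ.2.1 y (by simp)).2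
      by_cases hab : ({a} ∪ {b} : Finset I) ∈ B
      · rw [kappa_cons_cons_of_mem _ hab, Nat.even_add_one, Nat.odd_add_one, Nat.not_even_iff_odd,
          Nat.not_odd_iff_even]
        refine ⟨fun h => ?_, fun h => ⟨a, b, hab, hB.joinedOutside_refl ⟨hH.2 a, rfl⟩, hev h⟩⟩
        obtain ⟨c, d, hcd, hbc, hdv⟩ := hodd h
        exact (hB.joinedOutside_cross hH hab hcd hbc).trans hdv
      · have hab' : JoinedOutside H B {a} {b} := hB.joinedOutside_pair hH hxy hab
        rw [kappa_cons_cons_of_notMem _ hab]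
        refine ⟨fun h => hab'.trans (hev h), fun h => ?_⟩
        obtain ⟨c, d, hcd, hbc, hdv⟩ := hodd h
        exact ⟨c, d, hcd, hab'.trans hbc, hdv⟩

lemma IsSepBlock.joinedOutside_of_kappa_mod_two_eq (hH : IsCSS H) (hB : IsSepBlock D B)
    {γ₁ γ₂ : List (Finset I)} {x u v : Finset I} (h₁ : IsKPath H 1 γ₁) (j₁ : Joins γ₁ x u)
    (h₂ : IsKPath H 1 γ₂) (j₂ : Joins γ₂ x v) (hpar : kappa B γ₁ % 2 = kappa B γ₂ % 2) :
    JoinedOutside H B u v := by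
  refine (hB.joinedOutside_of_even_and_across_of_odd hH (h₁.reverse.append_tail h₂ j₁.reverse j₂)
    (j₁.reverse.append_tail j₂)).1 ?_
  rw [kappa_append_tail B j₁.reverse j₂, kappa_reverse, Nat.even_iff]
  omega

lemma IsSepBlock.exists_kappa_eq_of_joinedOutside (hB : IsSepBlock D B) {γ₁ : List (Finset I)}
    {x u v : Finset I} (h₁ : IsKPath H 1 γ₁) (j₁ : Joins γ₁ x u) (h : JoinedOutside H B u v) :
    ∃ γ₂, IsKPath H 1 γ₂ ∧ Joins γ₂ x v ∧ kappa B γ₂ = kappa B γ₁ := by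
  obtain ⟨σ, hσ, jσ, hσ0⟩ := hB.joinedOutside_iff.1 h
  exact ⟨γ₁ ++ σ.tail, h₁.append_tail hσ j₁ jσ, j₁.append_tail jσ,
    by rw [kappa_append_tail B j₁ jσ, hσ0, Nat.add_zero]⟩

lemma IsSepBlock.ABset_eq (hH : IsCSS H) (hB : IsSepBlock D B) (i : I) :
    ABset H B i = {v | JoinedOutside H B {i} v} := by
  ext v
  refine ⟨fun ⟨_, γ, hγ, hj, he⟩ => (hB.joinedOutside_of_even_and_across_of_odd hH hγ hj).1 he,
    fun h => ?_⟩
  obtain ⟨γ, hγ, hj, h0⟩ := hB.joinedOutside_iff.1 h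
  exact ⟨h.mem, γ, hγ, hj, h0 ▸ Even.zero⟩

lemma IsSepBlock.BBset_eq (hH : IsCSS H) (hB : IsSepBlock D B) {i : I} {b : Finset I}
    (hb : b ∈ BBset H B i) : BBset H B i = {v | JoinedOutside H B b v} := by
  obtain ⟨-, γ₁, h₁, j₁, hodd₁⟩ := hb
  ext v
  refine ⟨fun ⟨_, γ₂, h₂, j₂, hodd₂⟩ => hB.joinedOutside_of_kappa_mod_two_eq hH h₁ j₁ h₂ j₂ ?_,
    fun h => ?_⟩
  · rw [Nat.odd_iff.1 hodd₁, Nat.odd_iff.1 hodd₂]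
  · obtain ⟨γ₂, h₂, j₂, hκ⟩ := hB.exists_kappa_eq_of_joinedOutside h₁ j₁ h
    exact ⟨h.mem, γ₂, h₂, j₂, hκ ▸ hodd₁⟩

lemma mem_ABset_or_mem_BBset (hH : IsCSS H) (hconn : OneConnected H) (i : I) {v : Finset I}
    (hv : v ∈ level H 1) : v ∈ ABset H B i ∨ v ∈ BBset H B i := by
  obtain ⟨γ, hγ, hj, -⟩ := hconn {i} ⟨hH.2 i, rfl⟩ v hv
  exact (Nat.even_or_odd (kappa B γ)).imp (fun h => ⟨hv, γ, hγ, hj, h⟩)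
    (fun h => ⟨hv, γ, hγ, hj, h⟩)

lemma IsSepBlock.BBset_nonempty (hH : IsCSS H) (hconn : OneConnected H) (hB : IsSepBlock D B)
    (i : I) : (BBset H B i).Nonempty := by
  obtain ⟨E, hE⟩ := hB.1.1
  obtain ⟨a, b, -, rfl⟩ := Finset.card_eq_two.1 (hB.card_eq_two E hE)
  rcases mem_ABset_or_mem_BBset (B := B) hH hconn i ⟨hH.2 a, rfl⟩ with ⟨-, γ, hγ, hj, he⟩ | h
  · have hedge : IsKPath H 1 [{a}, {b}] :=
      isKPath_pair ⟨hH.2 a, rfl⟩ ⟨hH.2 b, rfl⟩ (hB.1.2.1 hE).2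
    have hj' : Joins [({a} : Finset I), {b}] {a} {b} := ⟨rfl, rfl⟩
    refine ⟨{b}, ⟨hH.2 b, rfl⟩, γ ++ [{b}], hγ.append_tail hedge hj hj', hj.append_tail hj', ?_⟩
    change Odd (kappa B (γ ++ [{a}, {b}].tail))
    rw [kappa_append_tail B hj hj', kappa_cons_cons_of_mem _ hE, kappa_singleton]
    exact he.add_one
  · exact ⟨_, h⟩

lemma IsSepBlock.singleton_notMem_BBset (hsc : SimplyConnected H)
    (hB : IsSepBlock D B) (i : I) : ({i} : Finset I) ∉ BBset H B i := by
  rintro ⟨hi, γ, hγ, hj, hodd⟩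
  have := hsc.kappa_mod_two_eq hB hγ (isKPath_singleton hi) hj ⟨rfl, rfl⟩
  rw [Nat.odd_iff.1 hodd] at this
  simp at this

end Classes

theorem ABset_BBset_are_the_components_general
    {I : Type*} [DecidableEq I] (H : Set (Finset I))
    (hH : IsCSS H) (hsc : SimplyConnected H)
    (D : NodalDatum H) (B : Set (Finset I)) (hB : IsSepBlock D B) :
    ∀ i : I,
      IsKComponent (H \ Cl H B) 1 (level H 1) (ABset H B i) ∧
      IsKComponent (H \ Cl H B) 1 (level H 1) (BBset H B i) ∧
      ABset H B i ≠ BBset H B i ∧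
      ∀ C : Set (Finset I), IsKComponent (H \ Cl H B) 1 (level H 1) C →
        C = ABset H B i ∨ C = BBset H B i := by
  intro i
  have hlevel := level_diff_cl_one (H := H) hB.card_eq_two
  have hi : ({i} : Finset I) ∈ level H 1 := ⟨hH.2 i, rfl⟩
  obtain ⟨b, hb⟩ := hB.BBset_nonempty hH hsc.1 i
  have hAcomp : IsKComponent (H \ Cl H B) 1 (level H 1) (ABset H B i) := by
    rw [hB.ABset_eq hH i]
    exact isKComponent_setOf_kJoinedIn (hlevel ▸ hi) hi
  have hBcomp : IsKComponent (H \ Cl H B) 1 (level H 1) (BBset H B i) := by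
    rw [hB.BBset_eq hH hb]
    exact isKComponent_setOf_kJoinedIn (hlevel ▸ hb.1) hb.1
  have hiA : ({i} : Finset I) ∈ ABset H B i := by
    rw [hB.ABset_eq hH i]; exact hB.joinedOutside_refl hi
  refine ⟨hAcomp, hBcomp, fun h => hB.singleton_notMem_BBset hsc i (h ▸ hiA), fun C hC => ?_⟩
  obtain ⟨c, hc⟩ := hC.1
  rcases mem_ABset_or_mem_BBset hH hsc.1 i (hC.2.1 hc) with h | h
  · exact Or.inl (hC.eq_of_mem hAcomp hc h)
  · exact Or.inr (hC.eq_of_mem hBcomp hc h)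

/-- For a nodal separating block `B` of a simply connected combinatorial
strata structure and `H_B = H \ Cl_H(B)`: for every `i ∈ I`, the sets `A_B(i)` and
`B_B(i)` are exactly the two 1-connected components of `H(1)` in `H_B`. -/
theorem ABset_BBset_are_the_components
    {I : Type*} [Fintype I] [DecidableEq I] (H : Set (Finset I))
    (hH : IsCSS H) (hsc : SimplyConnected H)
    (D : NodalDatum H) (B : Set (Finset I)) (hB : IsSepBlock D B) :
    ∀ i : I,
      IsKComponent (H \ Cl H B) 1 (level H 1) (ABset H B i) ∧
      IsKComponent (H \ Cl H B) 1 (level H 1) (BBset H B i) ∧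
      ABset H B i ≠ BBset H B i ∧
      ∀ C : Set (Finset I), IsKComponent (H \ Cl H B) 1 (level H 1) C →
        C = ABset H B i ∨ C = BBset H B i :=
  ABset_BBset_are_the_components_general H hH hsc D B hB
end
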